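/- Let ψ: ℝ_+ → ℝ_+ be non-increasing with tψ(t) < 1 for large t, and Ψ(t) = tψ(t)/(1 − tψ(t)). If x ∈ [0,1) is irrational and a_{n+1}(x) a_n(x) ≤ Ψ(q_n(x))/4 for all sufficiently large n, then x is ψ-Dirichlet improvable. -/

import Mathlib

/-- The Gauss map `T(0) = 0`, `T(x) = 1/x (mod 1)`. -/
noncomputable def gaussT (x : ℝ) : ℝ := if x = 0 then 0 else Int.fract x⁻¹

/-- The `n`-th continued fraction partial quotient of `x`, `aₙ(x) = ⌊1/T^(n-1)(x)⌋` (for `n ≥ 1`). -/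
noncomputable def cfA (x : ℝ) (n : ℕ) : ℤ := ⌊(gaussT^[n - 1] x)⁻¹⌋

/-- The numerators `pₙ` of the continued fraction convergents of `x`. -/
noncomputable def cfP (x : ℝ) : ℕ → ℤ
  | 0 => 0
  | 1 => 1
  | n + 2 => cfA x (n + 2) * cfP x (n + 1) + cfP x n

/-- The denominators `qₙ` of the continued fraction convergents of `x`. -/
noncomputable def cfQ (x : ℝ) : ℕ → ℤ
  | 0 => 1
  | 1 => cfA x 1
  | n + 2 => cfA x (n + 2) * cfQ x (n + 1) + cfQ x n

/-- `x` is `ψ`-Dirichlet improvable: there exists `N` such that for all `t > N`,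
the system `|qx − p| < ψ(t)`, `|q| < t` has a nontrivial integer solution. -/
def DirichletImprovable (ψ : ℝ → ℝ) (x : ℝ) : Prop :=
  ∃ N : ℝ, ∀ t > N, ∃ p q : ℤ, ¬(p = 0 ∧ q = 0) ∧ |(q : ℝ) * x - (p : ℝ)| < ψ t ∧ |(q : ℝ)| < t

/-!
Given a large `t`, pick `n` with `qₙ < t ≤ qₙ₊₁` and take `(p, q) = (pₙ, qₙ)`. With
`ξ = T^(n+1)(x)` one has `|qₙx − pₙ| = 1/(qₙ₊₁ + qₙξ)`, so it suffices that
`qₙ₊₁/(qₙξ) < Ψ(qₙ₊₁)`, after which monotonicity of `ψ` gives `ψ(qₙ₊₁) ≤ ψ(t)`. And indeed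
`qₙ₊₁ ≤ (aₙ₊₁ + 1)qₙ` and `1/ξ < aₙ₊₂ + 1`, while `(aₙ₊₁ + 1)(aₙ₊₂ + 1) ≤ 4aₙ₊₁aₙ₊₂ ≤ Ψ(qₙ₊₁)`.
-/

open Set

lemma gaussT_of_ne_zero {y : ℝ} (hy : y ≠ 0) : gaussT y = Int.fract y⁻¹ := if_neg hy

lemma irrational_gaussT {y : ℝ} (hy : Irrational y) : Irrational (gaussT y) := by
  rw [gaussT_of_ne_zero hy.ne_zero, Int.fract]
  exact hy.inv.sub_intCast _

lemma gaussT_mem_Ioo_of_irrational {y : ℝ} (hy : Irrational y) : gaussT y ∈ Ioo 0 1 := by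
  have hne := (irrational_gaussT hy).ne_zero
  rw [gaussT_of_ne_zero hy.ne_zero] at hne ⊢
  exact ⟨(Int.fract_nonneg _).lt_of_ne' hne, Int.fract_lt_one _⟩

lemma irrational_gaussT_iterate {x : ℝ} (hx : Irrational x) (k : ℕ) :
    Irrational (gaussT^[k] x) := by
  induction k with
  | zero => exact hx
  | succ k ih => rw [Function.iterate_succ_apply']; exact irrational_gaussT ih

lemma gaussT_iterate_mem_Ioo {x : ℝ} (hx : x ∈ Ioo 0 1) (hirr : Irrational x) :
    ∀ k, gaussT^[k] x ∈ Ioo 0 1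
  | 0 => hx
  | k + 1 => by
    rw [Function.iterate_succ_apply']
    exact gaussT_mem_Ioo_of_irrational (irrational_gaussT_iterate hirr k)

lemma cfA_succ (x : ℝ) (k : ℕ) : cfA x (k + 1) = ⌊(gaussT^[k] x)⁻¹⌋ := rfl

lemma one_le_cfA_succ {x : ℝ} (hx : x ∈ Ioo 0 1) (hirr : Irrational x) (k : ℕ) :
    1 ≤ cfA x (k + 1) := by
  obtain ⟨hpos, hlt⟩ := gaussT_iterate_mem_Ioo hx hirr k
  exact Int.le_floor.mpr (by exact_mod_cast (one_le_inv₀ hpos).mpr hlt.le)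

lemma gaussT_iterate_succ {x : ℝ} {k : ℕ} (hne : gaussT^[k] x ≠ 0) :
    gaussT^[k + 1] x = (gaussT^[k] x)⁻¹ - cfA x (k + 1) := by
  rw [Function.iterate_succ_apply', gaussT_of_ne_zero hne, Int.fract, cfA_succ]

lemma one_lt_floor_inv_add_one_mul {y : ℝ} (hy : 0 < y) : 1 < (⌊y⁻¹⌋ + 1) * y :=
  calc 1 = y⁻¹ * y := (inv_mul_cancel₀ hy.ne').symm
    _ < (⌊y⁻¹⌋ + 1) * y := by gcongr; exact Int.lt_floor_add_one _

lemma cfP_add_two (x : ℝ) (n : ℕ) : cfP x (n + 2) = cfA x (n + 2) * cfP x (n + 1) + cfP x n := rfl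

lemma cfQ_add_two (x : ℝ) (n : ℕ) : cfQ x (n + 2) = cfA x (n + 2) * cfQ x (n + 1) + cfQ x n := rfl

section Continuants

variable {x : ℝ} (ha : ∀ k, 1 ≤ cfA x (k + 1))
include ha

theorem one_le_cfQ : ∀ n, 1 ≤ cfQ x n
  | 0 => le_rfl
  | 1 => ha 0
  | n + 2 => by
    have := one_le_cfQ n
    have := one_le_cfQ (n + 1)
    have := ha (n + 1)
    rw [cfQ_add_two]
    nlinarith

theorem cfQ_le_cfQ_succ : ∀ n, cfQ x n ≤ cfQ x (n + 1)
  | 0 => ha 0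
  | n + 1 => by
    have := one_le_cfQ ha n
    have := one_le_cfQ ha (n + 1)
    have := ha (n + 1)
    rw [cfQ_add_two]
    nlinarith

theorem le_cfQ : ∀ n : ℕ, (n : ℤ) ≤ cfQ x n
  | 0 => zero_le_one
  | 1 => ha 0
  | n + 2 => by
    have : (n : ℤ) + 1 ≤ cfQ x (n + 1) := by exact_mod_cast le_cfQ (n + 1)
    have := one_le_cfQ ha n
    have := one_le_cfQ ha (n + 1)
    have := ha (n + 1)
    rw [cfQ_add_two]
    push_cast
    nlinarith

theorem cfQ_succ_le (n : ℕ) : cfQ x (n + 1) ≤ (cfA x (n + 1) + 1) * cfQ x n := by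
  cases n with
  | zero => simp [cfQ]
  | succ n =>
    have := cfQ_le_cfQ_succ ha n
    rw [cfQ_add_two]
    linarith

theorem exists_cfQ_lt_le_cfQ_succ {t : ℝ} {m : ℕ} (hm : (cfQ x m : ℝ) < t) :
    ∃ n, m ≤ n ∧ (cfQ x n : ℝ) < t ∧ t ≤ cfQ x (n + 1) := by
  have hbig : t ≤ cfQ x (m + ⌈t⌉₊) :=
    calc t ≤ ⌈t⌉₊ := Nat.le_ceil t
      _ ≤ ((m + ⌈t⌉₊ : ℕ) : ℤ) := by push_cast; linarith
      _ ≤ cfQ x (m + ⌈t⌉₊) := by exact_mod_cast le_cfQ ha _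
  obtain ⟨k, hk, hk1⟩ := Nat.exists_not_and_succ_of_not_zero_of_exists
    (p := fun k => t ≤ cfQ x (m + k)) (by simpa using hm) ⟨_, hbig⟩
  exact ⟨m + k, by omega, not_le.mp hk, hk1⟩

end Continuants

theorem cfP_mul_cfQ_sub_cfP_mul_cfQ (x : ℝ) :
    ∀ n : ℕ, cfP x (n + 1) * cfQ x n - cfP x n * cfQ x (n + 1) = (-1) ^ n
  | 0 => by simp [cfP, cfQ]
  | n + 1 => by
    rw [cfP_add_two, cfQ_add_two, pow_succ, ← cfP_mul_cfQ_sub_cfP_mul_cfQ x n]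
    ring

section Errors

variable {x : ℝ} (hne : ∀ k, gaussT^[k] x ≠ 0)
include hne

theorem cfQ_succ_mul_sub_cfP_succ : ∀ n : ℕ,
    (cfQ x (n + 1) : ℝ) * x - cfP x (n + 1) = -gaussT^[n + 1] x * ((cfQ x n : ℝ) * x - cfP x n)
  | 0 => by
    have hx : x ≠ 0 := hne 0
    rw [gaussT_iterate_succ (hne 0)]
    simp only [cfP, cfQ, Function.iterate_zero_apply, Int.cast_one, Int.cast_zero, sub_zero]
    field_simp
    ring
  | n + 1 => by
    have ih := cfQ_succ_mul_sub_cfP_succ n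
    have hξ := hne (n + 1)
    rw [cfP_add_two, cfQ_add_two, gaussT_iterate_succ hξ]
    push_cast
    field_simp
    linear_combination ih

theorem cfQ_mul_sub_cfP_mul_eq (n : ℕ) :
    ((cfQ x n : ℝ) * x - cfP x n) * (cfQ x (n + 1) + cfQ x n * gaussT^[n + 1] x) = (-1) ^ n := by
  have hdet : ((cfP x (n + 1) * cfQ x n - cfP x n * cfQ x (n + 1) : ℤ) : ℝ) = (-1) ^ n := by
    exact_mod_cast cfP_mul_cfQ_sub_cfP_mul_cfQ x n
  push_cast at hdet
  linear_combination hdet + (cfQ x n : ℝ) * cfQ_succ_mul_sub_cfP_succ hne n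

end Errors

lemma lt_mul_add_of_lt_div_one_sub_mul {Q s u : ℝ} (hu : u < 1) (h : Q < u / (1 - u) * s) :
    Q < u * (Q + s) := by
  have h1u : 0 < 1 - u := by linarith
  rw [div_mul_eq_mul_div, lt_div_iff₀ h1u] at h
  linarith

lemma add_one_mul_add_one_le_four_mul {a b : ℝ} (ha : 1 ≤ a) (hb : 1 ≤ b) :
    (a + 1) * (b + 1) ≤ 4 * (a * b) := by
  nlinarith

theorem cfQ_succ_lt {x : ℝ} (hx : x ∈ Ioo 0 1) (hirr : Irrational x) (n : ℕ) :
    (cfQ x (n + 1) : ℝ) <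
      (cfA x (n + 1) + 1) * (cfA x (n + 2) + 1) * (cfQ x n * gaussT^[n + 1] x) := by
  have ha := one_le_cfA_succ hx hirr
  have hq : (0 : ℝ) < cfQ x n := by exact_mod_cast one_le_cfQ ha n
  have ha1 : (1 : ℝ) ≤ cfA x (n + 1) := by exact_mod_cast ha n
  calc (cfQ x (n + 1) : ℝ) ≤ (cfA x (n + 1) + 1) * cfQ x n * 1 := by
        rw [mul_one]; exact_mod_cast cfQ_succ_le ha n
    _ < (cfA x (n + 1) + 1) * cfQ x n * ((cfA x (n + 2) + 1) * gaussT^[n + 1] x) := by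
        gcongr
        exact one_lt_floor_inv_add_one_mul (gaussT_iterate_mem_Ioo hx hirr _).1
    _ = _ := by ring

theorem abs_cfQ_mul_sub_cfP_lt {x : ℝ} (hx : x ∈ Ioo 0 1) (hirr : Irrational x) {n : ℕ} {c : ℝ}
    (hc : (cfQ x (n + 1) : ℝ) * c < 1)
    (hab : ((cfA x (n + 2) * cfA x (n + 1) : ℤ) : ℝ) ≤
      (cfQ x (n + 1) : ℝ) * c / (1 - (cfQ x (n + 1) : ℝ) * c) / 4) :
    |(cfQ x n : ℝ) * x - cfP x n| < c := by
  have ha := one_le_cfA_succ hx hirr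
  have hξ : 0 < gaussT^[n + 1] x := (gaussT_iterate_mem_Ioo hx hirr _).1
  have hq : (0 : ℝ) < cfQ x n := by exact_mod_cast one_le_cfQ ha n
  have hQ : (0 : ℝ) < cfQ x (n + 1) := by exact_mod_cast one_le_cfQ ha (n + 1)
  have ha1 : (1 : ℝ) ≤ cfA x (n + 1) := by exact_mod_cast ha n
  have hb1 : (1 : ℝ) ≤ cfA x (n + 2) := by exact_mod_cast ha (n + 1)
  have hQlt := cfQ_succ_lt hx hirr n
  have herr := cfQ_mul_sub_cfP_mul_eq (fun k => (irrational_gaussT_iterate hirr k).ne_zero) n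
  set Q : ℝ := ((cfQ x (n + 1) : ℤ) : ℝ)
  set q : ℝ := ((cfQ x n : ℤ) : ℝ)
  set ξ := gaussT^[n + 1] x
  set a : ℝ := ((cfA x (n + 1) : ℤ) : ℝ)
  set b : ℝ := ((cfA x (n + 2) : ℤ) : ℝ)
  push_cast at hab
  have hΨ : Q < Q * c / (1 - Q * c) * (q * ξ) :=
    calc Q < (a + 1) * (b + 1) * (q * ξ) := hQlt
      _ ≤ 4 * (a * b) * (q * ξ) := by gcongr ?_ * _; exact add_one_mul_add_one_le_four_mul ha1 hb1
      _ ≤ Q * c / (1 - Q * c) * (q * ξ) := by gcongr; linarith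
  have hD : 0 < Q + q * ξ := by positivity
  have hcD : 1 < c * (Q + q * ξ) := by
    refine lt_of_mul_lt_mul_left ?_ hQ.le
    rw [mul_one, ← mul_assoc]
    exact lt_mul_add_of_lt_div_one_sub_mul hc hΨ
  have habs : |q * x - cfP x n| * (Q + q * ξ) = 1 := by
    rw [← abs_of_pos hD, ← abs_mul, herr]
    simp
  exact lt_of_mul_lt_mul_right (habs ▸ hcD) hD.le

theorem dirichlet_improvable_general (ψ : ℝ → ℝ)
    (hψmono : ∀ s t : ℝ, 0 < s → s ≤ t → ψ t ≤ ψ s)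
    (hsmall : ∃ T : ℝ, ∀ t ≥ T, t * ψ t < 1)
    (x : ℝ) (hx : x ∈ Set.Ico (0 : ℝ) 1) (hirr : Irrational x)
    (h : ∃ N : ℕ, ∀ n ≥ N, 1 ≤ n →
        ((cfA x (n + 1) * cfA x n : ℤ) : ℝ) ≤
          (cfQ x n : ℝ) * ψ (cfQ x n) / (1 - (cfQ x n : ℝ) * ψ (cfQ x n)) / 4) :
    DirichletImprovable ψ x := by
  obtain ⟨T, hT⟩ := hsmall
  obtain ⟨N, hN⟩ := h
  have hx' : x ∈ Ioo 0 1 := ⟨hx.1.lt_of_ne' hirr.ne_zero, hx.2⟩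
  have ha := one_le_cfA_succ hx' hirr
  refine ⟨max T (cfQ x N), fun t ht => ?_⟩
  obtain ⟨hTt, hNt⟩ := max_lt_iff.mp ht
  obtain ⟨n, hn, hqn, hqn1⟩ := exists_cfQ_lt_le_cfQ_succ ha hNt
  have hq : (1 : ℝ) ≤ cfQ x n := by exact_mod_cast one_le_cfQ ha n
  refine ⟨cfP x n, cfQ x n, fun h0 => by norm_num [h0.2] at hq, ?_,
    by rwa [abs_of_pos (by linarith)]⟩
  calc |(cfQ x n : ℝ) * x - cfP x n| < ψ (cfQ x (n + 1)) :=
        abs_cfQ_mul_sub_cfP_lt hx' hirr (hT _ (hTt.le.trans hqn1))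
          (hN (n + 1) (by omega) (by omega))
    _ ≤ ψ t := hψmono _ _ (by linarith) hqn1

/-- Kleinbock–Wadleigh criterion (improvable direction): if `ψ` is non-increasing with
`tψ(t) < 1` for large `t`, `Ψ(t) = tψ(t)/(1 − tψ(t))`, `x ∈ [0,1)` is irrational and
`aₙ₊₁(x)aₙ(x) ≤ Ψ(qₙ(x))/4` for all sufficiently large `n`, then `x` is `ψ`-Dirichlet
improvable. -/
theorem dirichlet_improvable (ψ : ℝ → ℝ) (hψpos : ∀ t > (0 : ℝ), 0 < ψ t)
    (hψmono : ∀ s t : ℝ, 0 < s → s ≤ t → ψ t ≤ ψ s)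
    (hsmall : ∃ T : ℝ, ∀ t ≥ T, t * ψ t < 1)
    (x : ℝ) (hx : x ∈ Set.Ico (0 : ℝ) 1) (hirr : Irrational x)
    (h : ∃ N : ℕ, ∀ n ≥ N, 1 ≤ n →
        ((cfA x (n + 1) * cfA x n : ℤ) : ℝ) ≤
          (cfQ x n : ℝ) * ψ (cfQ x n) / (1 - (cfQ x n : ℝ) * ψ (cfQ x n)) / 4) :
    DirichletImprovable ψ x :=
  dirichlet_improvable_general ψ hψmono hsmall x hx hirr h
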